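/- Let A be a linear map on ℝ^{d₁×d₂} satisfying the RIP (1−δ)‖M‖_F² ≤ ‖A(M)‖² ≤ (1+δ)‖M‖_F² for all M with δ ≤ 1/2, and let Q_U ∈ ℝ^{d₁×r}, Q_V ∈ ℝ^{d₂×r} be isometries. Then the condition number of the linear map L(U,V) = A(Q_U Vᵀ + U Q_Vᵀ), i.e., the ratio of its largest singular value to its smallest nonzero singular value, is at most √6. -/
import Mathlib

open Matrix

noncomputable def frobNorm {m n : ℕ} (M : Matrix (Fin m) (Fin n) ℝ) : ℝ :=
  Real.sqrt (∑ i, ∑ j, (M i j) ^ 2)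

noncomputable def frobInner {m n : ℕ} (X Y : Matrix (Fin m) (Fin n) ℝ) : ℝ :=
  Matrix.trace (Yᵀ * X)

lemma frobNorm_sq {m n : ℕ} (M : Matrix (Fin m) (Fin n) ℝ) :
    frobNorm M ^ 2 = ∑ i, ∑ j, (M i j) ^ 2 :=
  Real.sq_sqrt (by positivity)

lemma frobNorm_sq_trace {m n : ℕ} (M : Matrix (Fin m) (Fin n) ℝ) :
    Matrix.trace (Mᵀ * M) = frobNorm M ^ 2 := by
  rw [frobNorm_sq]
  simp only [Matrix.trace, Matrix.diag, Matrix.mul_apply, Matrix.transpose_apply, sq]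
  exact Finset.sum_comm

lemma trace_tt_nonneg {m n : ℕ} (M : Matrix (Fin m) (Fin n) ℝ) :
    0 ≤ Matrix.trace (Mᵀ * M) := by
  rw [frobNorm_sq_trace]; positivity

lemma frob_sq_add_le {m n : ℕ} (X Y : Matrix (Fin m) (Fin n) ℝ) :
    frobNorm (X + Y) ^ 2 ≤ 2 * frobNorm X ^ 2 + 2 * frobNorm Y ^ 2 := by
  rw [frobNorm_sq, frobNorm_sq, frobNorm_sq]
  calc ∑ i, ∑ j, ((X + Y) i j) ^ 2
      ≤ ∑ i, ∑ j, (2 * (X i j) ^ 2 + 2 * (Y i j) ^ 2) := by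
        apply Finset.sum_le_sum; intro i _
        apply Finset.sum_le_sum; intro j _
        simp only [Matrix.add_apply]; nlinarith [sq_nonneg (X i j - Y i j)]
    _ = 2 * (∑ i, ∑ j, (X i j) ^ 2) + 2 * (∑ i, ∑ j, (Y i j) ^ 2) := by
        simp [Finset.sum_add_distrib, Finset.mul_sum]

lemma frob_QUVt {d₁ d₂ r : ℕ} (QU : Matrix (Fin d₁) (Fin r) ℝ)
    (hQU : QUᵀ * QU = 1) (V : Matrix (Fin d₂) (Fin r) ℝ) :
    frobNorm (QU * Vᵀ) ^ 2 = frobNorm V ^ 2 := by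
  rw [← frobNorm_sq_trace, ← frobNorm_sq_trace]
  have : (QU * Vᵀ)ᵀ * (QU * Vᵀ) = V * Vᵀ := by
    rw [Matrix.transpose_mul, Matrix.transpose_transpose, Matrix.mul_assoc,
      ← Matrix.mul_assoc QUᵀ, hQU, Matrix.one_mul]
  rw [this, Matrix.trace_mul_comm]

lemma frob_UQVt {d₁ d₂ r : ℕ} (QV : Matrix (Fin d₂) (Fin r) ℝ)
    (hQV : QVᵀ * QV = 1) (U : Matrix (Fin d₁) (Fin r) ℝ) :
    frobNorm (U * QVᵀ) ^ 2 = frobNorm U ^ 2 := by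
  rw [← frobNorm_sq_trace, ← frobNorm_sq_trace]
  have : (U * QVᵀ)ᵀ * (U * QVᵀ) = QV * ((Uᵀ * U) * QVᵀ) := by
    rw [Matrix.transpose_mul, Matrix.transpose_transpose]
    simp only [Matrix.mul_assoc]
  rw [this, Matrix.trace_mul_comm, Matrix.mul_assoc, hQV, Matrix.mul_one]

lemma expand_key {d₁ d₂ r : ℕ} (QU : Matrix (Fin d₁) (Fin r) ℝ) (QV : Matrix (Fin d₂) (Fin r) ℝ)
    (hQU : QUᵀ * QU = 1) (hQV : QVᵀ * QV = 1)
    (U : Matrix (Fin d₁) (Fin r) ℝ) (V : Matrix (Fin d₂) (Fin r) ℝ) :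
    frobNorm (QU * Vᵀ + U * QVᵀ) ^ 2
      = frobNorm U ^ 2 + frobNorm V ^ 2
        + 2 * Matrix.trace ((QUᵀ * U)ᵀ * (Vᵀ * QV)) := by
  rw [← frobNorm_sq_trace]
  have hexp : (QU * Vᵀ + U * QVᵀ)ᵀ * (QU * Vᵀ + U * QVᵀ)
      = V * ((QUᵀ * QU) * Vᵀ) + V * ((QUᵀ * U) * QVᵀ)
        + (QV * ((Uᵀ * QU) * Vᵀ) + QV * ((Uᵀ * U) * QVᵀ)) := by
    simp only [Matrix.transpose_add, Matrix.transpose_mul, Matrix.transpose_transpose,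
      Matrix.add_mul, Matrix.mul_add, Matrix.mul_assoc]
    abel
  rw [hexp, Matrix.trace_add, Matrix.trace_add, Matrix.trace_add, hQU, Matrix.one_mul]
  have h1 : Matrix.trace (V * Vᵀ) = frobNorm V ^ 2 := by
    rw [Matrix.trace_mul_comm, frobNorm_sq_trace]
  have h2 : Matrix.trace (QV * ((Uᵀ * U) * QVᵀ)) = frobNorm U ^ 2 := by
    rw [Matrix.trace_mul_comm, Matrix.mul_assoc, hQV, Matrix.mul_one, frobNorm_sq_trace]
  have h3 : Matrix.trace (V * ((QUᵀ * U) * QVᵀ)) = Matrix.trace ((QUᵀ * U)ᵀ * (Vᵀ * QV)) := by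
    rw [← Matrix.trace_transpose (V * ((QUᵀ * U) * QVᵀ))]
    simp only [Matrix.transpose_mul, Matrix.transpose_transpose]
    rw [Matrix.trace_mul_comm]
    simp only [Matrix.mul_assoc]
    rw [← Matrix.mul_assoc Vᵀ QV, ← Matrix.mul_assoc Uᵀ QU, Matrix.trace_mul_comm]
  have h4 : Matrix.trace (QV * ((Uᵀ * QU) * Vᵀ)) = Matrix.trace ((QUᵀ * U)ᵀ * (Vᵀ * QV)) := by
    rw [Matrix.trace_mul_comm]
    simp only [Matrix.transpose_mul, Matrix.transpose_transpose, Matrix.mul_assoc]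
  rw [h1, h2, h3, h4]; ring

/-- If 𝒜 satisfies the RIP with δ ≤ 1/2 and Q_U, Q_V are isometries, then the
condition number of L(U,V) = 𝒜(Q_U Vᵀ + U Q_Vᵀ) is at most √6: for every pair
(U,V) and every pair (U',V') orthogonal to the kernel of L (w.r.t. the Frobenius
inner product on pairs), ‖L(U,V)‖·‖(U',V')‖ ≤ √6·‖L(U',V')‖·‖(U,V)‖, i.e. the
largest singular value of L is at most √6 times its smallest nonzero one. -/
theorem condition_number_le_sqrt6 {d₁ d₂ r m : ℕ} (δ : ℝ) (hδ0 : 0 ≤ δ) (hδ : δ ≤ 1/2)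
    (𝒜 : Matrix (Fin d₁) (Fin d₂) ℝ →ₗ[ℝ] EuclideanSpace ℝ (Fin m))
    (hRIP : ∀ M : Matrix (Fin d₁) (Fin d₂) ℝ,
      (1 - δ) * frobNorm M ^ 2 ≤ ‖𝒜 M‖ ^ 2 ∧ ‖𝒜 M‖ ^ 2 ≤ (1 + δ) * frobNorm M ^ 2)
    (QU : Matrix (Fin d₁) (Fin r) ℝ) (QV : Matrix (Fin d₂) (Fin r) ℝ)
    (hQU : QUᵀ * QU = 1) (hQV : QVᵀ * QV = 1) :
    ∀ (U U' : Matrix (Fin d₁) (Fin r) ℝ) (V V' : Matrix (Fin d₂) (Fin r) ℝ),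
      (∀ (KU : Matrix (Fin d₁) (Fin r) ℝ) (KV : Matrix (Fin d₂) (Fin r) ℝ),
          𝒜 (QU * KVᵀ + KU * QVᵀ) = 0 → frobInner U' KU + frobInner V' KV = 0) →
      ‖𝒜 (QU * Vᵀ + U * QVᵀ)‖ * Real.sqrt (frobNorm U' ^ 2 + frobNorm V' ^ 2)
        ≤ Real.sqrt 6 * ‖𝒜 (QU * V'ᵀ + U' * QVᵀ)‖
            * Real.sqrt (frobNorm U ^ 2 + frobNorm V ^ 2) := by
  intro U U' V V' hker
  set A : Matrix (Fin r) (Fin r) ℝ := QUᵀ * U' with hA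
  set B : Matrix (Fin r) (Fin r) ℝ := V'ᵀ * QV with hB
  -- kernel orthogonality gives trace ((A-B)ᵀ(A-B)) = 0
  have hzero : 𝒜 (QU * (-(QV * (A - B)ᵀ))ᵀ + (QU * (A - B)) * QVᵀ) = 0 := by
    have : QU * (-(QV * (A - B)ᵀ))ᵀ + (QU * (A - B)) * QVᵀ = 0 := by
      simp only [Matrix.transpose_neg, Matrix.transpose_mul, Matrix.transpose_transpose,
        Matrix.mul_neg, Matrix.mul_assoc]
      abel
    rw [this, map_zero]
  have hC0 : Matrix.trace ((A - B)ᵀ * (A - B)) = 0 := by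
    have h := hker (QU * (A - B)) (-(QV * (A - B)ᵀ)) hzero
    simp only [frobInner] at h
    have e1 : Matrix.trace ((QU * (A - B))ᵀ * U') = Matrix.trace ((A - B)ᵀ * A) := by
      rw [Matrix.transpose_mul, Matrix.mul_assoc, hA]
    have e2 : Matrix.trace ((-(QV * (A - B)ᵀ))ᵀ * V') = -Matrix.trace ((A - B)ᵀ * B) := by
      rw [Matrix.transpose_neg, Matrix.neg_mul, Matrix.trace_neg, neg_inj,
        Matrix.transpose_mul, Matrix.transpose_transpose, Matrix.mul_assoc,
        Matrix.trace_mul_comm]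
      rw [← Matrix.trace_transpose (QVᵀ * V' * (A - B))]
      simp only [Matrix.transpose_mul, Matrix.transpose_transpose, hB]
    rw [e1, e2] at h
    have : Matrix.trace ((A - B)ᵀ * (A - B))
        = Matrix.trace ((A - B)ᵀ * A) - Matrix.trace ((A - B)ᵀ * B) := by
      rw [Matrix.mul_sub, Matrix.trace_sub]
    rw [this]; linarith
  have hBA : Matrix.trace (Bᵀ * A) = Matrix.trace (Aᵀ * B) := by
    rw [← Matrix.trace_transpose (Bᵀ * A)]
    simp only [Matrix.transpose_mul, Matrix.transpose_transpose]
  have hCexp : Matrix.trace ((A - B)ᵀ * (A - B))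
      = Matrix.trace (Aᵀ * A) + Matrix.trace (Bᵀ * B) - 2 * Matrix.trace (Aᵀ * B) := by
    simp only [Matrix.transpose_sub, Matrix.sub_mul, Matrix.mul_sub, Matrix.trace_sub]
    rw [hBA]; ring
  have hcross : 0 ≤ Matrix.trace (Aᵀ * B) := by
    have h1 := trace_tt_nonneg A
    have h2 := trace_tt_nonneg B
    rw [hCexp] at hC0
    linarith
  -- cross term in the expansion of (U',V') equals trace (Aᵀ * B)
  have hexp' : frobNorm (QU * V'ᵀ + U' * QVᵀ) ^ 2
      = frobNorm U' ^ 2 + frobNorm V' ^ 2 + 2 * Matrix.trace (Aᵀ * B) := by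
    rw [expand_key QU QV hQU hQV U' V']
  -- lower bound
  set x' : ℝ := ‖𝒜 (QU * V'ᵀ + U' * QVᵀ)‖ with hx'
  set x : ℝ := ‖𝒜 (QU * Vᵀ + U * QVᵀ)‖ with hx
  have hlow : frobNorm U' ^ 2 + frobNorm V' ^ 2 ≤ 2 * x' ^ 2 := by
    have h := (hRIP (QU * V'ᵀ + U' * QVᵀ)).1
    rw [hexp'] at h
    nlinarith
  -- upper bound
  have hup : x ^ 2 ≤ 3 * (frobNorm U ^ 2 + frobNorm V ^ 2) := by
    have h := (hRIP (QU * Vᵀ + U * QVᵀ)).2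
    have h2 := frob_sq_add_le (QU * Vᵀ) (U * QVᵀ)
    rw [frob_QUVt QU hQU V, frob_UQVt QV hQV U] at h2
    have h3 : (0:ℝ) ≤ frobNorm (QU * Vᵀ + U * QVᵀ) ^ 2 := sq_nonneg _
    nlinarith
  -- combine
  have hs0 : (0:ℝ) ≤ frobNorm U ^ 2 + frobNorm V ^ 2 := by positivity
  have hs'0 : (0:ℝ) ≤ frobNorm U' ^ 2 + frobNorm V' ^ 2 := by positivity
  have hx0 : 0 ≤ x := norm_nonneg _
  have hx'0 : 0 ≤ x' := norm_nonneg _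
  have key : (x * Real.sqrt (frobNorm U' ^ 2 + frobNorm V' ^ 2)) ^ 2
      ≤ (Real.sqrt 6 * x' * Real.sqrt (frobNorm U ^ 2 + frobNorm V ^ 2)) ^ 2 := by
    rw [mul_pow, mul_pow, mul_pow, Real.sq_sqrt hs'0, Real.sq_sqrt hs0,
      Real.sq_sqrt (by norm_num : (0:ℝ) ≤ 6)]
    nlinarith [sq_nonneg x, sq_nonneg x', mul_le_mul_of_nonneg_left hlow (sq_nonneg x),
      mul_le_mul_of_nonneg_right hup (sq_nonneg x')]
  have h1 := Real.sqrt_le_sqrt key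
  rw [Real.sqrt_sq (by positivity : (0:ℝ) ≤ x * Real.sqrt (frobNorm U' ^ 2 + frobNorm V' ^ 2)),
    Real.sqrt_sq (by positivity : (0:ℝ) ≤ Real.sqrt 6 * x' * Real.sqrt (frobNorm U ^ 2 + frobNorm V ^ 2))] at h1
  exact h1
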